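/- Let 0 < p, q < 1 with q + 2p < 1, and suppose a_{m,t} ≤ 1 − m^{-q} for all m and all 1 ≤ t ≤ m. Then the null and alternative hypotheses separate asymptotically: TV(P0_m, P1_m) → 1 as m → ∞. (Theorem 3.2, part 1: asymptotic separation.) -/

import Mathlib

open MeasureTheory Filter

/-- The uniform distribution on `[0, a]` (for `a > 0`). -/
noncomputable def unif (a : ℝ) : Measure ℝ :=
  (ENNReal.ofReal a)⁻¹ • volume.restrict (Set.Icc 0 a)

/-- The mixture `(1 - ε)·U[0,1] + ε·U[0,a]`. -/
noncomputable def mix (ε a : ℝ) : Measure ℝ :=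
  ENNReal.ofReal (1 - ε) • unif 1 + ENNReal.ofReal ε • unif a

/-- The null law `P0_m`: `m` i.i.d. uniform-`[0,1]` coordinates. -/
noncomputable def nullLaw (m : ℕ) : Measure (Fin m → ℝ) :=
  Measure.pi fun _ => unif 1

/-- The alternative law `P1_m`: independent coordinates, the `t`-th distributed as
`(1 - ε)·U[0,1] + ε·U[0, a t]`. -/
noncomputable def altLaw (m : ℕ) (ε : ℝ) (a : Fin m → ℝ) : Measure (Fin m → ℝ) :=
  Measure.pi fun t => mix ε (a t)

/-- Total variation distance `sup_A |μ(A) - ν(A)|` over measurable sets. -/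
noncomputable def TV {α : Type*} [MeasurableSpace α] (μ ν : Measure α) : ℝ :=
  ⨆ A : {s : Set α // MeasurableSet s}, |(μ A).toReal - (ν A).toReal|

/-!
Test the two laws by counting the coordinates that fall in the top strip `(1 - δ, 1]`, where
`δ = m^{-q}`. A coordinate lands there with probability `δ` under the null law and, because
`a ≤ 1 - δ`, with probability `(1 - ε)δ` under the alternative, so the expected counts differ by
`mεδ`, while by independence both counts have variance at most `mδ`. Thresholding the count halfway
between the two means, Chebyshev's inequality bounds both error probabilities by
`4/(mε²δ) = 4m^{q+2p-1} → 0`.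
-/

open ProbabilityTheory Set

section TotalVariation

variable {α : Type*} [MeasurableSpace α] (μ ν : Measure α) [IsProbabilityMeasure μ]
  [IsProbabilityMeasure ν]

lemma abs_measureReal_sub_measureReal_le_one (s : Set α) : |μ.real s - ν.real s| ≤ 1 := by
  have := measureReal_nonneg (μ := μ) (s := s)
  have := measureReal_nonneg (μ := ν) (s := s)
  have := measureReal_le_one (μ := μ) (s := s)
  have := measureReal_le_one (μ := ν) (s := s)
  exact abs_le.2 ⟨by linarith, by linarith⟩

lemma TV_le_one : TV μ ν ≤ 1 :=
  ciSup_le fun s => abs_measureReal_sub_measureReal_le_one μ ν s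

lemma abs_measureReal_sub_measureReal_le_TV {s : Set α} (hs : MeasurableSet s) :
    |μ.real s - ν.real s| ≤ TV μ ν :=
  le_ciSup (f := fun s : {s : Set α // MeasurableSet s} => |μ.real s - ν.real s|)
    ⟨1, forall_mem_range.2 fun s => abs_measureReal_sub_measureReal_le_one μ ν s⟩ ⟨s, hs⟩

lemma one_sub_measureReal_compl_sub_le_TV {s : Set α} (hs : MeasurableSet s) :
    1 - μ.real sᶜ - ν.real s ≤ TV μ ν := by
  rw [measureReal_compl hs, probReal_univ]
  exact (le_of_eq (by ring)).trans ((le_abs_self _).trans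
    (abs_measureReal_sub_measureReal_le_TV μ ν hs))

end TotalVariation

section CountStatistic

variable {ι α : Type*} [Fintype ι] [MeasurableSpace α] {μ : ι → Measure α}
  [∀ i, IsProbabilityMeasure (μ i)] {E : Set α}

noncomputable def countIn (E : Set α) : (ι → α) → ℝ := ∑ i, fun x => E.indicator (fun _ => 1) (x i)

omit [MeasurableSpace α] in
lemma countIn_apply (E : Set α) (x : ι → α) :
    countIn E x = ∑ i, E.indicator (fun _ => 1) (x i) :=
  Finset.sum_apply _ _ _

lemma measurable_countIn (hE : MeasurableSet E) : Measurable (countIn (ι := ι) E) := by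
  rw [funext (countIn_apply E)]
  exact Finset.measurable_sum _ fun i _ => (measurable_const.indicator hE).comp (measurable_pi_apply i)

lemma memLp_indicator_one (ν : Measure α) [IsFiniteMeasure ν] (hE : MeasurableSet E) :
    MemLp (E.indicator fun _ => (1 : ℝ)) 2 ν :=
  memLp_indicator_const 2 hE 1 (Or.inr (measure_ne_top _ _))

lemma integral_countIn (hE : MeasurableSet E) :
    ∫ x, countIn E x ∂Measure.pi μ = ∑ i, (μ i).real E := by
  simp_rw [countIn_apply]
  rw [integral_finsetSum _ fun i _ =>
    integrable_comp_eval ((memLp_indicator_one (μ i) hE).integrable one_le_two)]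
  refine Finset.sum_congr rfl fun i _ => ?_
  rw [integral_comp_eval (memLp_indicator_one (μ i) hE).aestronglyMeasurable]
  simp [integral_indicator_const _ hE]

lemma variance_countIn_le (hE : MeasurableSet E) :
    Var[countIn E; Measure.pi μ] ≤ ∑ i, (μ i).real E := by
  rw [countIn, variance_sum_pi fun i => memLp_indicator_one (μ i) hE]
  refine Finset.sum_le_sum fun i _ => ?_
  have h01 : ∀ᵐ y ∂μ i, E.indicator (fun _ => (1 : ℝ)) y ∈ Icc 0 1 := ae_of_all _ fun y => by
    by_cases hy : y ∈ E <;> simp [hy]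
  have hmean : (μ i)[E.indicator fun _ => 1] = (μ i).real E := by
    simp [integral_indicator_const _ hE]
  calc Var[E.indicator (fun _ => 1); μ i] ≤ (1 - (μ i).real E) * ((μ i).real E - 0) := by
        rw [← hmean]
        exact variance_le_sub_mul_sub h01 (measurable_const.indicator hE).aemeasurable
    _ ≤ (μ i).real E := by nlinarith [measureReal_nonneg (μ := μ i) (s := E)]

lemma pi_le_abs_countIn_sub_le (hE : MeasurableSet E) {g : ℝ} (hg : 0 < g) :
    Measure.pi μ {x | g ≤ |countIn E x - ∑ i, (μ i).real E|}
      ≤ ENNReal.ofReal ((∑ i, (μ i).real E) / g ^ 2) := by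
  have hmem : MemLp (countIn E) 2 (Measure.pi μ) := memLp_finsetSum' _ fun i _ =>
    (memLp_indicator_one (μ i) hE).comp_measurePreserving (measurePreserving_eval μ i)
  calc _ ≤ ENNReal.ofReal (Var[countIn E; Measure.pi μ] / g ^ 2) := by
        simpa only [integral_countIn hE] using meas_ge_le_variance_div_sq hmem hg
    _ ≤ _ := by gcongr; exact variance_countIn_le hE

end CountStatistic

lemma one_sub_le_TV_pi {ι α : Type*} [Fintype ι] [MeasurableSpace α] {μ ν : ι → Measure α}
    [∀ i, IsProbabilityMeasure (μ i)] [∀ i, IsProbabilityMeasure (ν i)] {E : Set α}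
    (hE : MeasurableSet E) {g : ℝ} (hg : 0 < g)
    (hgap : ∑ i, (ν i).real E + 2 * g ≤ ∑ i, (μ i).real E) :
    1 - (∑ i, (μ i).real E + ∑ i, (ν i).real E) / g ^ 2 ≤
      TV (Measure.pi μ) (Measure.pi ν) := by
  set A : Set (ι → α) := {x | ∑ i, (μ i).real E - g ≤ countIn E x}
  have hA : MeasurableSet A := measurableSet_le measurable_const (measurable_countIn hE)
  have hμ : (Measure.pi μ).real Aᶜ ≤ (∑ i, (μ i).real E) / g ^ 2 := by
    refine ENNReal.toReal_le_of_le_ofReal (by positivity)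
      ((measure_mono fun x hx => ?_).trans (pi_le_abs_countIn_sub_le hE hg))
    simp only [A, mem_compl_iff, mem_ofPred_eq, not_le] at hx
    rw [mem_ofPred_eq, le_abs]
    right
    linarith
  have hν : (Measure.pi ν).real A ≤ (∑ i, (ν i).real E) / g ^ 2 := by
    refine ENNReal.toReal_le_of_le_ofReal (by positivity)
      ((measure_mono fun x hx => ?_).trans (pi_le_abs_countIn_sub_le hE hg))
    simp only [A, mem_ofPred_eq] at hx
    rw [mem_ofPred_eq, le_abs]
    left
    linarith
  have := one_sub_measureReal_compl_sub_le_TV (Measure.pi μ) (Measure.pi ν) hA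
  rw [add_div]
  linarith

section UniformMixture

lemma unif_apply (a : ℝ) {s : Set ℝ} (hs : MeasurableSet s) :
    unif a s = (ENNReal.ofReal a)⁻¹ * volume (s ∩ Icc 0 a) := by
  rw [unif, Measure.smul_apply, Measure.restrict_apply hs, smul_eq_mul]

lemma isProbabilityMeasure_unif {a : ℝ} (ha : 0 < a) : IsProbabilityMeasure (unif a) := by
  constructor
  rw [unif_apply a MeasurableSet.univ, univ_inter, Real.volume_Icc, sub_zero,
    ENNReal.inv_mul_cancel (ENNReal.ofReal_pos.mpr ha).ne' ENNReal.ofReal_ne_top]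

lemma isProbabilityMeasure_mix {ε a : ℝ} (hε0 : 0 ≤ ε) (hε1 : ε ≤ 1) (ha : 0 < a) :
    IsProbabilityMeasure (mix ε a) := by
  constructor
  simp only [mix, Measure.add_apply, Measure.smul_apply, smul_eq_mul,
    (isProbabilityMeasure_unif one_pos).measure_univ,
    (isProbabilityMeasure_unif ha).measure_univ, mul_one]
  rw [← ENNReal.ofReal_add (by linarith) hε0, sub_add_cancel, ENNReal.ofReal_one]

lemma isProbabilityMeasure_altLaw {m : ℕ} {ε : ℝ} (hε0 : 0 ≤ ε) (hε1 : ε ≤ 1) {a : Fin m → ℝ}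
    (ha : ∀ t, 0 < a t) : IsProbabilityMeasure (altLaw m ε a) :=
  have := fun t => isProbabilityMeasure_mix hε0 hε1 (ha t)
  Measure.pi.instIsProbabilityMeasure _

instance (m : ℕ) : IsProbabilityMeasure (nullLaw m) :=
  have := isProbabilityMeasure_unif one_pos
  Measure.pi.instIsProbabilityMeasure _

lemma unif_one_Ioi {c : ℝ} (hc : 0 ≤ c) : unif 1 (Ioi c) = ENNReal.ofReal (1 - c) := by
  have : Ioi c ∩ Icc 0 1 = Ioc c 1 := by
    ext x
    exact ⟨fun h => ⟨h.1, h.2.2⟩, fun h => ⟨h.1, hc.trans h.1.le, h.2⟩⟩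
  simp [unif_apply _ measurableSet_Ioi, this]

lemma unif_Ioi_of_le {a c : ℝ} (h : a ≤ c) : unif a (Ioi c) = 0 := by
  have : Ioi c ∩ Icc 0 a = ∅ :=
    eq_empty_of_forall_notMem fun x hx => (hx.1.trans_le hx.2.2).not_ge h
  simp [unif_apply _ measurableSet_Ioi, this]

lemma mix_Ioi {ε a c : ℝ} (hε : ε ≤ 1) (hc : 0 ≤ c) (hac : a ≤ c) :
    mix ε a (Ioi c) = ENNReal.ofReal ((1 - ε) * (1 - c)) := by
  simp only [mix, Measure.add_apply, Measure.smul_apply, smul_eq_mul,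
    unif_one_Ioi hc, unif_Ioi_of_le hac, mul_zero, add_zero]
  rw [← ENNReal.ofReal_mul (by linarith)]

end UniformMixture

lemma one_sub_le_TV_nullLaw_altLaw {m : ℕ} (hm : 0 < m) {ε δ : ℝ} (hε0 : 0 < ε) (hε1 : ε ≤ 1)
    (hδ0 : 0 < δ) (hδ1 : δ ≤ 1) {a : Fin m → ℝ} (ha0 : ∀ t, 0 < a t) (ha1 : ∀ t, a t ≤ 1 - δ) :
    1 - 8 / (m * ε ^ 2 * δ) ≤ TV (nullLaw m) (altLaw m ε a) := by
  have := isProbabilityMeasure_unif one_pos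
  have := fun t => isProbabilityMeasure_mix hε0.le hε1 (ha0 t)
  have hc : 0 ≤ 1 - δ := by linarith
  have hnull : ∑ _t : Fin m, (unif 1).real (Ioi (1 - δ)) = m * δ := by
    simp [measureReal_def, unif_one_Ioi hc, hδ0.le]
  have halt : ∑ t, (mix ε (a t)).real (Ioi (1 - δ)) = m * δ - m * ε * δ := by
    simp only [measureReal_def, mix_Ioi hε1 hc (ha1 _), sub_sub_cancel,
      ENNReal.toReal_ofReal (mul_nonneg (sub_nonneg.2 hε1) hδ0.le), Finset.sum_const,
      Finset.card_univ, Fintype.card_fin, nsmul_eq_mul]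
    ring
  have hm' : (0 : ℝ) < m := Nat.cast_pos.2 hm
  have key := one_sub_le_TV_pi (μ := fun _ => unif 1) (ν := fun t => mix ε (a t))
    measurableSet_Ioi (g := m * ε * δ / 2) (by positivity) (by rw [hnull, halt]; linarith)
  rw [hnull, halt] at key
  refine le_trans ?_ key
  rw [sub_le_sub_iff_left, div_le_div_iff₀ (by positivity) (by positivity)]
  nlinarith [mul_pos (mul_pos hm' hε0) hδ0]

lemma tendsto_natCast_mul_rpow_neg_sq_mul_rpow_neg {p q : ℝ} (hpq : q + 2 * p < 1) :
    Tendsto (fun m : ℕ => (m : ℝ) * ((m : ℝ) ^ (-p)) ^ 2 * (m : ℝ) ^ (-q)) atTop atTop := by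
  refine ((tendsto_rpow_atTop (by linarith : 0 < 1 - 2 * p - q)).comp
    tendsto_natCast_atTop_atTop).congr' ?_
  filter_upwards [eventually_gt_atTop 0] with m hm
  have hm' : (0 : ℝ) < m := Nat.cast_pos.2 hm
  rw [Function.comp_apply, show 1 - 2 * p - q = 1 + -p * 2 + -q by ring, Real.rpow_add hm',
    Real.rpow_add hm', Real.rpow_one, Real.rpow_mul hm'.le, Real.rpow_two]

theorem asymptotic_separation_general (p q : ℝ) (hp0 : 0 < p)
    (hq0 : 0 < q) (hpq : q + 2 * p < 1)
    (a : (m : ℕ) → Fin m → ℝ)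
    (ha0 : ∀ m, 2 ≤ m → ∀ t, 0 < a m t)
    (ha1 : ∀ m : ℕ, 2 ≤ m → ∀ t, a m t ≤ 1 - (m : ℝ) ^ (-q)) :
    Tendsto (fun m => TV (nullLaw m) (altLaw m ((m : ℝ) ^ (-p)) (a m))) atTop (nhds 1) := by
  have hlower : Tendsto (fun m : ℕ => 1 - 8 / ((m : ℝ) * ((m : ℝ) ^ (-p)) ^ 2 * (m : ℝ) ^ (-q)))
      atTop (nhds 1) := by
    simpa using tendsto_const_nhds.sub
      (tendsto_const_nhds.div_atTop (tendsto_natCast_mul_rpow_neg_sq_mul_rpow_neg hpq))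
  have hpow {m : ℕ} (hm : 2 ≤ m) {r : ℝ} (hr : 0 < r) : 0 < (m : ℝ) ^ (-r) ∧ (m : ℝ) ^ (-r) ≤ 1 :=
    ⟨Real.rpow_pos_of_pos (by positivity) _,
      Real.rpow_le_one_of_one_le_of_nonpos (by exact_mod_cast (by omega : 1 ≤ m)) (by linarith)⟩
  refine tendsto_of_tendsto_of_tendsto_of_le_of_le' hlower tendsto_const_nhds ?_ ?_
  · filter_upwards [eventually_ge_atTop 2] with m hm
    exact one_sub_le_TV_nullLaw_altLaw (by omega) (hpow hm hp0).1 (hpow hm hp0).2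
      (hpow hm hq0).1 (hpow hm hq0).2 (ha0 m hm) (ha1 m hm)
  · filter_upwards [eventually_ge_atTop 2] with m hm
    have := isProbabilityMeasure_altLaw (hpow hm hp0).1.le (hpow hm hp0).2 (ha0 m hm)
    exact TV_le_one _ _

/-- **Theorem 3.2, part 1 (asymptotic separation).** Let `0 < p, q < 1` with `q + 2p < 1`,
`ε_m = m^{-p}`, and `a m t ∈ (0,1]` with `a m t ≤ 1 - m^{-q}` for all `m ≥ 2`, `1 ≤ t ≤ m`.
Then the null and alternative hypotheses separate asymptotically:
`TV(P0_m, P1_m) → 1` as `m → ∞`. -/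
theorem asymptotic_separation (p q : ℝ) (hp0 : 0 < p) (hp1 : p < 1)
    (hq0 : 0 < q) (hq1 : q < 1) (hpq : q + 2 * p < 1)
    (a : (m : ℕ) → Fin m → ℝ)
    (ha0 : ∀ m, 2 ≤ m → ∀ t, 0 < a m t)
    (ha1 : ∀ m : ℕ, 2 ≤ m → ∀ t, a m t ≤ 1 - (m : ℝ) ^ (-q)) :
    Tendsto (fun m => TV (nullLaw m) (altLaw m ((m : ℝ) ^ (-p)) (a m))) atTop (nhds 1) :=
  asymptotic_separation_general p q hp0 hq0 hpq a ha0 ha1
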